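/- Let |±_{mn}⟩ = (|m⟩±|n⟩)/√2 and |∼±_{mn}⟩ = (|m⟩±i|n⟩)/√2 in ℂ³. If Π is a positive semidefinite operator on ℂ³ satisfying ⟨+_{01}|Π|+_{01}⟩·⟨−_{01}|Π|−_{01}⟩ = 0, ⟨+_{02}|Π|+_{02}⟩·⟨−_{02}|Π|−_{02}⟩ = 0, and ⟨∼+_{12}|Π|∼+_{12}⟩·⟨∼−_{12}|Π|∼−_{12}⟩ = 0, then Π = 0. -/

import Mathlib

open Matrix Kronecker
open scoped ComplexOrder
noncomputable section

open scoped Classical in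
/-- total matrix square root: the PSD square root when `M` is PSD, else `0`. -/
def matSqrt {n : Type*} [Fintype n] [DecidableEq n] (M : Matrix n n ℂ) : Matrix n n ℂ :=
  if h : M.PosSemidef then
    (h.1.eigenvectorUnitary : Matrix n n ℂ) * diagonal ((↑) ∘ Real.sqrt ∘ h.1.eigenvalues) *
      (star (h.1.eigenvectorUnitary : Matrix n n ℂ))
  else 0

/-- trace (Schatten-1) norm `Tr √(MᴴM)`. -/
def traceNorm {n : Type*} [Fintype n] [DecidableEq n] (M : Matrix n n ℂ) : ℝ :=
  (matSqrt (Mᴴ * M)).trace.re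

/-- trace distance. -/
def traceDist {n : Type*} [Fintype n] [DecidableEq n] (ρ σ : Matrix n n ℂ) : ℝ :=
  traceNorm (ρ - σ) / 2

/-- fidelity `‖√ρ√σ‖₁`. -/
def fidelity {n : Type*} [Fintype n] [DecidableEq n] (ρ σ : Matrix n n ℂ) : ℝ :=
  traceNorm (matSqrt ρ * matSqrt σ)

/-- partial trace over the first tensor factor. -/
def trFst {a b : Type*} [Fintype a] (M : Matrix (a × b) (a × b) ℂ) : Matrix b b ℂ :=
  Matrix.of fun i j => ∑ k, M (k, i) (k, j)

/-- partial trace over the second tensor factor. -/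
def trSnd {a b : Type*} [Fintype b] (M : Matrix (a × b) (a × b) ℂ) : Matrix a a ℂ :=
  Matrix.of fun i j => ∑ k, M (i, k) (j, k)

/-- rank-one projector `|v⟩⟨v|`. -/
def outerP {n : Type*} (v : n → ℂ) : Matrix n n ℂ :=
  Matrix.of fun i j => v i * star (v j)

/-- tensor product of vectors. -/
def vkron {a b : Type*} (v : a → ℂ) (w : b → ℂ) : a × b → ℂ :=
  fun p => v p.1 * w p.2


def sq2 : ℂ := (Real.sqrt 2 : ℝ)
def p01 : Fin 3 → ℂ := ![1/sq2, 1/sq2, 0]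
def m01 : Fin 3 → ℂ := ![1/sq2, -(1/sq2), 0]
def p02 : Fin 3 → ℂ := ![1/sq2, 0, 1/sq2]
def m02 : Fin 3 → ℂ := ![1/sq2, 0, -(1/sq2)]
def tp12 : Fin 3 → ℂ := ![0, 1/sq2, Complex.I/sq2]
def tm12 : Fin 3 → ℂ := ![0, 1/sq2, -(Complex.I/sq2)]

/-- one representative from each of the three orthogonal pairs, selected by a sign. -/
def pairSel : Fin 3 → Bool → (Fin 3 → ℂ)
  | 0, true => p01
  | 0, false => m01
  | 1, true => p02
  | 1, false => m02
  | 2, true => tp12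
  | 2, false => tm12

set_option maxHeartbeats 3200000 in
theorem stmt4 (P : Matrix (Fin 3) (Fin 3) ℂ) (hP : P.PosSemidef)
    (h1 : (star p01 ⬝ᵥ (P *ᵥ p01)) * (star m01 ⬝ᵥ (P *ᵥ m01)) = 0)
    (h2 : (star p02 ⬝ᵥ (P *ᵥ p02)) * (star m02 ⬝ᵥ (P *ᵥ m02)) = 0)
    (h3 : (star tp12 ⬝ᵥ (P *ᵥ tp12)) * (star tm12 ⬝ᵥ (P *ᵥ tm12)) = 0) :
    P = 0 := by
  have hs : sq2 ≠ 0 := by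
    simp only [sq2, ne_eq, Complex.ofReal_eq_zero]
    positivity
  rcases mul_eq_zero.mp h1 with h1 | h1 <;>
  rcases mul_eq_zero.mp h2 with h2 | h2 <;>
  rcases mul_eq_zero.mp h3 with h3 | h3 <;>
  all_goals (
    replace h1 := (hP.dotProduct_mulVec_zero_iff _).mp h1
    replace h2 := (hP.dotProduct_mulVec_zero_iff _).mp h2
    replace h3 := (hP.dotProduct_mulVec_zero_iff _).mp h3
    ext i j
    have e1 := congrFun h1 i
    have e2 := congrFun h2 i
    have e3 := congrFun h3 i
    simp [mulVec, dotProduct, Fin.sum_univ_three, p01, m01, p02, m02, tp12, tm12,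
      div_eq_mul_inv, mul_add, mul_comm, ← add_mul, mul_eq_zero, inv_eq_zero, hs] at e1 e2 e3
    field_simp at e1 e2 e3
    simp only [Complex.ext_iff, Complex.add_re, Complex.add_im, Complex.neg_re, Complex.neg_im,
      Complex.mul_re, Complex.mul_im, Complex.I_re, Complex.I_im, Complex.zero_re,
      Complex.zero_im] at e1 e2 e3
    norm_num at e1 e2 e3
    have key : P i 0 = 0 ∧ P i 1 = 0 ∧ P i 2 = 0 := by
      refine ⟨?_, ?_, ?_⟩ <;>
        simp only [Complex.ext_iff, Complex.zero_re, Complex.zero_im] <;>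
        constructor <;>
        linarith [e1.1, e1.2, e2.1, e2.2, e3.1, e3.2]
    fin_cases j <;> simp only [Matrix.zero_apply] <;>
      [exact key.1; exact key.2.1; exact key.2.2])
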